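/- Every language definable by a monadic first-order formula over (∈, s) on ℕ (first-order quantifiers only, atomic formulas s^k x ∈ X with free set variables) is recognisable by a deterministic automaton whose co-Büchi and Büchi acceptance conditions coincide; in particular, it lies in the intersection of the co-Büchi recognisable and deterministic-Büchi recognisable languages. -/
import Mathlib


structure Automaton (σ : Type) where
  Q : Type
  fin : Fintype Q
  Δ : Q → σ → Q → Prop
  q0 : Q
  F : Set Q

def Automaton.IsRun {σ : Type} (A : Automaton σ) (α : ℕ → σ) (ρ : ℕ → A.Q) : Prop :=
  ρ 0 = A.q0 ∧ ∀ i, A.Δ (ρ i) (α i) (ρ (i + 1))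

def Automaton.BuchiAccepts {σ : Type} (A : Automaton σ) (α : ℕ → σ) : Prop :=
  ∃ ρ, A.IsRun α ρ ∧ {i | ρ i ∈ A.F}.Infinite

def Automaton.CoBuchiAccepts {σ : Type} (A : Automaton σ) (α : ℕ → σ) : Prop :=
  ∃ ρ, A.IsRun α ρ ∧ {i | ρ i ∉ A.F}.Finite

def BuchiRecognisable {σ : Type} (L : Set (ℕ → σ)) : Prop :=
  ∃ A : Automaton σ, L = {α | A.BuchiAccepts α}

def CoBuchiRecognisable {σ : Type} (L : Set (ℕ → σ)) : Prop :=
  ∃ A : Automaton σ, L = {α | A.CoBuchiAccepts α}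

structure DetAutomaton (σ : Type) where
  Q : Type
  fin : Fintype Q
  δ : Q → σ → Q
  q0 : Q
  F : Set Q

def DetAutomaton.run {σ : Type} (D : DetAutomaton σ) (α : ℕ → σ) : ℕ → D.Q
  | 0 => D.q0
  | i + 1 => D.δ (D.run α i) (α i)

def DetAutomaton.BuchiAccepts {σ : Type} (D : DetAutomaton σ) (α : ℕ → σ) : Prop :=
  {i | D.run α i ∈ D.F}.Infinite

def DetAutomaton.CoBuchiAccepts {σ : Type} (D : DetAutomaton σ) (α : ℕ → σ) : Prop :=
  {i | D.run α i ∉ D.F}.Finite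

inductive S1S : Type
  | atom (k x X : ℕ) : S1S
  | not : S1S → S1S
  | and : S1S → S1S → S1S
  | exFO (x : ℕ) : S1S → S1S
  | exSO (X : ℕ) : S1S → S1S

def S1S.Sat (v : ℕ → ℕ) (A : ℕ → Set ℕ) : S1S → Prop
  | atom k x X => v x + k ∈ A X
  | .not φ => ¬ φ.Sat v A
  | .and φ ψ => φ.Sat v A ∧ ψ.Sat v A
  | exFO x φ => ∃ b : ℕ, φ.Sat (Function.update v x b) A
  | exSO X φ => ∃ B : Set ℕ, φ.Sat v (Function.update A X B)

/-- `φ` is purely first-order: no second-order quantifiers occur. -/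
def S1S.FirstOrder : S1S → Prop
  | atom _ _ _ => True
  | .not φ => φ.FirstOrder
  | .and φ ψ => φ.FirstOrder ∧ ψ.FirstOrder
  | exFO _ φ => φ.FirstOrder
  | exSO _ _ => False

/-- Existential fragment: a block of second-order existentials over a first-order matrix. -/
inductive S1S.ExFrag : S1S → Prop
  | fo {φ : S1S} : φ.FirstOrder → ExFrag φ
  | ex {φ : S1S} (X : ℕ) : ExFrag φ → ExFrag (S1S.exSO X φ)

/-- The sets `X_0, …, X_{m-1}` encoded by the characteristic word `α`. -/
def setsOf (m : ℕ) (α : ℕ → (Fin m → Bool)) : ℕ → Set ℕ :=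
  fun X => {i | ∃ h : X < m, α i ⟨X, h⟩ = true}

/-- `φ` (a sentence with free set variables among `X_0, …, X_{m-1}`) defines the language `L`:
its truth value depends only on the first `m` set variables (and on no first-order valuation),
and `L` is exactly the set of characteristic words of its models. -/
def Defines (m : ℕ) (φ : S1S) (L : Set (ℕ → (Fin m → Bool))) : Prop :=
  (∀ v v' : ℕ → ℕ, ∀ A A' : ℕ → Set ℕ, (∀ X, X < m → A X = A' X) →
      (φ.Sat v A ↔ φ.Sat v' A')) ∧
  L = {α | φ.Sat (fun _ => 0) (setsOf m α)}

def S1SDefinable (m : ℕ) (L : Set (ℕ → (Fin m → Bool))) : Prop :=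
  ∃ φ : S1S, Defines m φ L

def ExS1SDefinable (m : ℕ) (L : Set (ℕ → (Fin m → Bool))) : Prop :=
  ∃ φ : S1S, φ.ExFrag ∧ Defines m φ L

/-! ### Auxiliary development -/

section Aux

variable (m : ℕ)

/-- Windows of length `K+1` over the alphabet `Fin m → Bool`. -/
abbrev Win (K : ℕ) : Type := Fin (K + 1) → (Fin m → Bool)

/-- The window of `α` starting at position `n`. -/
def winAt (K : ℕ) (α : ℕ → (Fin m → Bool)) (n : ℕ) : Win m K := fun j => α (n + j)

/-- `w` occurs as a window somewhere in `α`. -/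
def OccP (K : ℕ) (α : ℕ → (Fin m → Bool)) (w : Win m K) : Prop :=
  ∃ n, winAt m K α n = w

/-- Restriction of a window to a shorter window. -/
def resW {K1 K : ℕ} (h : K1 ≤ K) (w : Win m K) : Win m K1 :=
  fun j => w ⟨j, by omega⟩

lemma resW_winAt {K1 K : ℕ} (h : K1 ≤ K) (α : ℕ → (Fin m → Bool)) (n : ℕ) :
    resW m h (winAt m K α n) = winAt m K1 α n := rfl

lemma occ_res {K1 K : ℕ} (h : K1 ≤ K) (α : ℕ → (Fin m → Bool)) :
    OccP m K1 α = fun w1 => ∃ w, OccP m K α w ∧ resW m h w = w1 := by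
  funext w1
  apply propext
  constructor
  · rintro ⟨n, rfl⟩
    exact ⟨winAt m K α n, ⟨n, rfl⟩, rfl⟩
  · rintro ⟨w, ⟨n, rfl⟩, rfl⟩
    exact ⟨n, rfl⟩

/-- Key normal form: the truth of a first-order formula over `(∈, s)` depends on `α` only
through which windows occur in `α`, and on `v` only through the windows at positions `v x`. -/
lemma key : ∀ φ : S1S, φ.FirstOrder →
    ∃ K : ℕ, ∃ G : (Win m K → Prop) → (ℕ → Win m K) → Prop,
      ∀ (α : ℕ → (Fin m → Bool)) (v : ℕ → ℕ),
        φ.Sat v (setsOf m α) ↔ G (OccP m K α) (fun x => winAt m K α (v x)) := by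
  intro φ
  induction φ with
  | atom k x X =>
    intro _
    refine ⟨k, fun _Occ f => ∃ h : X < m, f x ⟨k, by omega⟩ ⟨X, h⟩ = true, fun α v => ?_⟩
    simp only [S1S.Sat, setsOf, winAt, Set.mem_setOf_eq]
  | not φ ih =>
    intro hFO
    obtain ⟨K, G, hG⟩ := ih hFO
    exact ⟨K, fun Occ f => ¬ G Occ f, fun α v => by simp [S1S.Sat, hG α v]⟩
  | and φ ψ ihφ ihψ =>
    intro hFO
    obtain ⟨K1, G1, hG1⟩ := ihφ hFO.1
    obtain ⟨K2, G2, hG2⟩ := ihψ hFO.2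
    have h1 : K1 ≤ max K1 K2 := le_max_left _ _
    have h2 : K2 ≤ max K1 K2 := le_max_right _ _
    refine ⟨max K1 K2, fun Occ f =>
      G1 (fun w1 => ∃ w, Occ w ∧ resW m h1 w = w1) (fun x => resW m h1 (f x)) ∧
      G2 (fun w2 => ∃ w, Occ w ∧ resW m h2 w = w2) (fun x => resW m h2 (f x)),
      fun α v => ?_⟩
    have e1 : (fun w1 => ∃ w, OccP m (max K1 K2) α w ∧ resW m h1 w = w1) = OccP m K1 α :=
      (occ_res m h1 α).symm
    have e2 : (fun w2 => ∃ w, OccP m (max K1 K2) α w ∧ resW m h2 w = w2) = OccP m K2 α :=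
      (occ_res m h2 α).symm
    simp only [S1S.Sat, hG1 α v, hG2 α v, e1, e2]
    exact Iff.rfl
  | exFO x φ ih =>
    intro hFO
    obtain ⟨K, G, hG⟩ := ih hFO
    refine ⟨K, fun Occ f => ∃ w, Occ w ∧ G Occ (Function.update f x w), fun α v => ?_⟩
    have efun : ∀ b : ℕ, (fun y => winAt m K α (Function.update v x b y)) =
        Function.update (fun y => winAt m K α (v y)) x (winAt m K α b) := by
      intro b
      funext y
      by_cases hy : y = x <;> simp [Function.update, hy]
    constructor
    · rintro ⟨b, hb⟩
      refine ⟨winAt m K α b, ⟨b, rfl⟩, ?_⟩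
      have := (hG α (Function.update v x b)).mp hb
      rwa [efun b] at this
    · rintro ⟨w, ⟨b, rfl⟩, hw⟩
      refine ⟨b, (hG α (Function.update v x b)).mpr ?_⟩
      rwa [efun b]
  | exSO X φ ih =>
    intro hFO
    exact absurd hFO id

end Aux

/-- State of the tracking automaton: a (capped) letter count, the initial window,
a buffer of the last `K+1` letters, and the set of windows seen so far. -/
structure St (m K : ℕ) where
  cnt : Fin (K + 2)
  pref : Win m K
  buf : Win m K
  occ : Finset (Win m K)

instance (m K : ℕ) : Fintype (St m K) :=
  Fintype.ofEquiv (Fin (K + 2) × Win m K × Win m K × Finset (Win m K))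
    { toFun := fun p => ⟨p.1, p.2.1, p.2.2.1, p.2.2.2⟩
      invFun := fun q => (q.cnt, q.pref, q.buf, q.occ)
      left_inv := fun _ => rfl
      right_inv := fun _ => rfl }

instance (m K : ℕ) : DecidableEq (St m K) := fun a b =>
  decidable_of_iff (a.cnt = b.cnt ∧ a.pref = b.pref ∧ a.buf = b.buf ∧ a.occ = b.occ)
    (by cases a; cases b; simp)

/-- The buffer update: shift in the new letter. -/
def bufStep {m K : ℕ} (q : St m K) (a : Fin m → Bool) : Win m K :=
  fun j => if h : (j : ℕ) < K then q.buf ⟨(j : ℕ) + 1, by omega⟩ else a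

/-- Transition function of the tracking automaton. -/
def stepSt (m K : ℕ) (q : St m K) (a : Fin m → Bool) : St m K where
  cnt := if h : (q.cnt : ℕ) < K + 1 then ⟨(q.cnt : ℕ) + 1, by omega⟩ else q.cnt
  pref := fun j => if (j : ℕ) = (q.cnt : ℕ) then a else q.pref j
  buf := bufStep q a
  occ := if K ≤ (q.cnt : ℕ) then insert (bufStep q a) q.occ else q.occ

/-- The deterministic tracking automaton for a window-predicate `G`. -/
def autD (m K : ℕ) (G : (Win m K → Prop) → (ℕ → Win m K) → Prop) :
    DetAutomaton (Fin m → Bool) where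
  Q := St m K
  fin := inferInstance
  δ := stepSt m K
  q0 := ⟨0, fun _ _ => false, fun _ _ => false, ∅⟩
  F := {q | ((q.cnt : ℕ) = K + 1) ∧ G (fun w => w ∈ q.occ) (fun _ => q.pref)}

lemma autD_inv (m K : ℕ) (G : (Win m K → Prop) → (ℕ → Win m K) → Prop)
    (α : ℕ → (Fin m → Bool)) : ∀ n : ℕ,
    ((((autD m K G).run α n).cnt : ℕ) = min n (K + 1)) ∧
    (∀ j : Fin (K + 1), (j : ℕ) < n → ((autD m K G).run α n).pref j = α j) ∧
    (∀ j : Fin (K + 1), K + 1 ≤ n + (j : ℕ) →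
      ((autD m K G).run α n).buf j = α (n + (j : ℕ) - (K + 1))) ∧
    (∀ w, w ∈ ((autD m K G).run α n).occ ↔ ∃ i, i + (K + 1) ≤ n ∧ winAt m K α i = w) := by
  intro n
  induction n with
  | zero =>
    refine ⟨by simp [DetAutomaton.run, autD], ?_, ?_, ?_⟩
    · intro j hj; omega
    · intro j hj; have := j.isLt; omega
    · intro w
      simp only [DetAutomaton.run, autD, Finset.notMem_empty, false_iff]
      rintro ⟨i, hi, -⟩; omega
  | succ n ih =>
    obtain ⟨hc, hp, hb, ho⟩ := ih
    have hrun : (autD m K G).run α (n + 1) = stepSt m K ((autD m K G).run α n) (α n) := rfl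
    set q := (autD m K G).run α n with hq
    have hbuf' : ∀ j : Fin (K + 1), K + 1 ≤ (n + 1) + (j : ℕ) →
        bufStep q (α n) j = α ((n + 1) + (j : ℕ) - (K + 1)) := by
      intro j hj
      by_cases hjK : (j : ℕ) < K
      · have : bufStep q (α n) j = q.buf ⟨(j : ℕ) + 1, by omega⟩ := by
          simp [bufStep, hjK]
        rw [this, hb ⟨(j : ℕ) + 1, by omega⟩ (by simp; omega)]
        exact congrArg α (by simp; omega)
      · have hjK' : (j : ℕ) = K := by have := j.isLt; omega
        have : bufStep q (α n) j = α n := by simp [bufStep, hjK]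
        rw [this]
        exact congrArg α (by omega)
    refine ⟨?_, ?_, ?_, ?_⟩
    · rw [hrun]
      simp only [stepSt]
      by_cases hlt : (q.cnt : ℕ) < K + 1
      · simp only [dif_pos hlt]; omega
      · simp only [dif_neg hlt]; omega
    · intro j hj
      rw [hrun]
      simp only [stepSt]
      by_cases hje : (j : ℕ) = (q.cnt : ℕ)
      · have := j.isLt
        have hjn : (j : ℕ) = n := by omega
        rw [if_pos hje, hjn]
      · rw [if_neg hje]
        apply hp
        have := j.isLt
        omega
    · intro j hj
      rw [hrun]
      exact hbuf' j hj
    · intro w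
      rw [hrun]
      simp only [stepSt]
      by_cases hKc : K ≤ (q.cnt : ℕ)
      · have hnK : K ≤ n := by omega
        have hwin : bufStep q (α n) = winAt m K α (n - K) := by
          funext j
          rw [hbuf' j (by have := j.isLt; omega)]
          simp only [winAt]
          exact congrArg α (by omega)
        rw [if_pos hKc, Finset.mem_insert, hwin, ho w]
        constructor
        · rintro (rfl | ⟨i, hi, hw⟩)
          · exact ⟨n - K, by omega, rfl⟩
          · exact ⟨i, by omega, hw⟩
        · rintro ⟨i, hi, hw⟩
          by_cases hin : i + (K + 1) ≤ n
          · exact Or.inr ⟨i, hin, hw⟩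
          · have : i = n - K := by omega
            subst this
            exact Or.inl hw.symm
      · rw [if_neg hKc, ho w]
        constructor
        · rintro ⟨i, hi, hw⟩; exact ⟨i, by omega, hw⟩
        · rintro ⟨i, hi, hw⟩
          exact ⟨i, by omega, hw⟩

open Classical in
/-- On every word, membership of the run of the tracking automaton in the acceptance set
eventually stabilises to the value of `G` on the limit data. -/
lemma autD_stab (m K : ℕ) (G : (Win m K → Prop) → (ℕ → Win m K) → Prop)
    (α : ℕ → (Fin m → Bool)) :
    ∃ N : ℕ, ∀ n, N ≤ n →
      ((autD m K G).run α n ∈ (autD m K G).F ↔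
        G (OccP m K α) (fun _ => winAt m K α 0)) := by
  classical
  set g : Win m K → ℕ := fun w => if h : OccP m K α w then h.choose else 0 with hg
  refine ⟨(K + 1) + Finset.univ.sup g, fun n hn => ?_⟩
  obtain ⟨hc, hp, _, ho⟩ := autD_inv m K G α n
  have hn1 : K + 1 ≤ n := by omega
  have hcnt : (((autD m K G).run α n).cnt : ℕ) = K + 1 := by omega
  have hpref : ((autD m K G).run α n).pref = winAt m K α 0 := by
    funext j
    rw [hp j (by have := j.isLt; omega)]
    simp [winAt]
  have hocc : (fun w => w ∈ ((autD m K G).run α n).occ) = OccP m K α := by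
    funext w
    apply propext
    rw [ho w]
    constructor
    · rintro ⟨i, _, hw⟩; exact ⟨i, hw⟩
    · intro hw
      have hgw : g w = hw.choose := dif_pos hw
      have hle : g w ≤ Finset.univ.sup g := Finset.le_sup (Finset.mem_univ w)
      exact ⟨hw.choose, by omega, hw.choose_spec⟩
  show ((((autD m K G).run α n).cnt : ℕ) = K + 1) ∧ _ ↔ _
  rw [hpref, hocc, hcnt]
  simp

/-- Büchi and co-Büchi acceptance coincide on the tracking automaton, and both are
equivalent to the limit predicate. -/
lemma autD_acc (m K : ℕ) (G : (Win m K → Prop) → (ℕ → Win m K) → Prop)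
    (α : ℕ → (Fin m → Bool)) :
    ((autD m K G).BuchiAccepts α ↔ G (OccP m K α) (fun _ => winAt m K α 0)) ∧
    ((autD m K G).CoBuchiAccepts α ↔ G (OccP m K α) (fun _ => winAt m K α 0)) := by
  obtain ⟨N, hN⟩ := autD_stab m K G α
  constructor
  · constructor
    · intro hbu
      by_contra hnG
      have hsub : {i | (autD m K G).run α i ∈ (autD m K G).F} ⊆ Set.Iio N := by
        intro i hi
        by_contra hiN
        exact hnG ((hN i (by simpa using hiN)).mp hi)
      exact hbu (Set.Finite.subset (Set.finite_Iio N) hsub)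
    · intro hG
      apply Set.Infinite.mono (s := Set.Ici N)
      · intro i hi
        exact (hN i hi).mpr hG
      · exact Set.Ici_infinite N
  · constructor
    · intro hco
      by_contra hnG
      have hsub : Set.Ici N ⊆ {i | (autD m K G).run α i ∉ (autD m K G).F} := by
        intro i hi hiF
        exact hnG ((hN i hi).mp hiF)
      exact (Set.Ici_infinite N) (Set.Finite.subset hco hsub)
    · intro hG
      apply Set.Finite.subset (Set.finite_Iio N)
      intro i hi
      by_contra hiN
      exact hi ((hN i (by simpa using hiN)).mpr hG)

/-- Every language definable by a monadic first-order formula over `(∈, s)` is recognised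
by a deterministic automaton on which the Büchi and co-Büchi acceptance conditions
coincide; in particular it is co-Büchi recognisable and deterministic-Büchi recognisable. -/
theorem firstOrder_definable_det (m : ℕ) (L : Set (ℕ → (Fin m → Bool)))
    (h : ∃ φ : S1S, φ.FirstOrder ∧ Defines m φ L) :
    (∃ D : DetAutomaton (Fin m → Bool),
      (∀ α, D.BuchiAccepts α ↔ D.CoBuchiAccepts α) ∧
      L = {α | D.BuchiAccepts α}) ∧
    CoBuchiRecognisable L := by
  obtain ⟨φ, hFO, hdep, hL⟩ := h
  obtain ⟨K, G, hG⟩ := key m φ hFO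
  have hLeq : L = {α | G (OccP m K α) (fun _ => winAt m K α 0)} := by
    rw [hL]
    ext α
    simp only [Set.mem_setOf_eq]
    exact hG α (fun _ => 0)
  refine ⟨⟨autD m K G, fun α => ?_, ?_⟩, ?_⟩
  · rw [(autD_acc m K G α).1, (autD_acc m K G α).2]
  · rw [hLeq]
    ext α
    simp only [Set.mem_setOf_eq]
    exact ((autD_acc m K G α).1).symm
  · refine ⟨⟨(autD m K G).Q, (autD m K G).fin, fun q a q' => q' = (autD m K G).δ q a,
      (autD m K G).q0, (autD m K G).F⟩, ?_⟩
    rw [hLeq]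
    ext α
    simp only [Set.mem_setOf_eq]
    constructor
    · intro hGα
      exact ⟨(autD m K G).run α, ⟨rfl, fun i => rfl⟩, ((autD_acc m K G α).2).mpr hGα⟩
    · rintro ⟨ρ, ⟨h0, hstep⟩, hfin⟩
      have hρ : ∀ i, ρ i = (autD m K G).run α i := by
        intro i
        induction i with
        | zero => exact h0
        | succ i ih => rw [hstep i, ih]; rfl
      have hfin' : {i | (autD m K G).run α i ∉ (autD m K G).F}.Finite := by
        have e : {i | ρ i ∉ (autD m K G).F} = {i | (autD m K G).run α i ∉ (autD m K G).F} := by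
          ext i
          simp only [Set.mem_setOf_eq, hρ i]
        rwa [e] at hfin
      exact ((autD_acc m K G α).2).mp hfin'
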